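/- arXiv:2102.02883 — 4 statements merged into one kernel-verified Lean document; each statement's English description precedes it below -/
import Mathlib

section
/- Let c ∈ R^n, p ∈ R^n with p ≠ c, and E ∈ R^{n×n} positive definite. Then for each x ∈ R^n with x ≠ c, the equation π⊥(E(x−c))·E·(x−p) = 0 holds if and only if x lies on the line through c with direction p−c, i.e., x = c + λ(p−c) for some λ ∈ R. -/
open Matrix

/-- Orthogonal projection `π⊥(z) = I - zzᵀ/‖z‖²`. -/
noncomputable def projPerp {n : ℕ} (z : Fin n → ℝ) : Matrix (Fin n) (Fin n) ℝ :=
  1 - (z ⬝ᵥ z)⁻¹ • vecMulVec z z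

lemma vecMulVec_mulVec' {n : ℕ} (a b w : Fin n → ℝ) :
    vecMulVec a b *ᵥ w = (b ⬝ᵥ w) • a := by
  ext i
  simp [vecMulVec, mulVec, dotProduct, Finset.mul_sum, mul_comm, mul_left_comm]

lemma projPerp_mulVec {n : ℕ} (z w : Fin n → ℝ) :
    projPerp z *ᵥ w = w - ((z ⬝ᵥ z)⁻¹ * (z ⬝ᵥ w)) • z := by
  simp [projPerp, sub_mulVec, smul_mulVec, vecMulVec_mulVec', smul_smul]

/-- `π⊥(E(x-c)) E (x-p) = 0` iff `x` lies on the line through `c` with direction `p - c`. -/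
theorem avoidance_equilibria {n : ℕ} (E : Matrix (Fin n) (Fin n) ℝ) (hE : E.PosDef)
    (c p : Fin n → ℝ) (hp : p ≠ c) (x : Fin n → ℝ) (hx : x ≠ c) :
    projPerp (E *ᵥ (x - c)) *ᵥ (E *ᵥ (x - p)) = 0 ↔ ∃ lam : ℝ, x = c + lam • (p - c) := by
  have hEdet : IsUnit E.det := isUnit_iff_ne_zero.mpr (ne_of_gt hE.det_pos)
  have : Invertible E := E.invertibleOfIsUnitDet hEdet
  have hinj : Function.Injective (E.mulVec) := E.mulVec_injective_of_invertible
  set z := E *ᵥ (x - c) with hzdef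
  have hxc : x - c ≠ 0 := sub_ne_zero.mpr hx
  have hz : z ≠ 0 := by
    intro h
    exact hxc (hinj (by simpa using h))
  have hzz : z ⬝ᵥ z ≠ 0 := fun h => hz (dotProduct_self_eq_zero.mp h)
  constructor
  · intro h
    rw [projPerp_mulVec, sub_eq_zero] at h
    set μ : ℝ := (z ⬝ᵥ z)⁻¹ * (z ⬝ᵥ (E *ᵥ (x - p))) with hμ
    have hEe : E *ᵥ (x - p) = E *ᵥ (μ • (x - c)) := by
      rw [mulVec_smul, ← hzdef, h]
    have hxp : x - p = μ • (x - c) := hinj hEe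
    have hμ1 : μ ≠ 1 := by
      intro h1
      rw [h1, one_smul] at hxp
      exact hp (sub_right_inj.mp hxp)
    have hpc : p - c = (1 - μ) • (x - c) := by
      have : p - c = (x - c) - (x - p) := by abel
      rw [this, hxp, sub_smul, one_smul]
    refine ⟨(1 - μ)⁻¹, ?_⟩
    have h1μ : (1 : ℝ) - μ ≠ 0 := sub_ne_zero.mpr (Ne.symm hμ1)
    rw [hpc, smul_smul, inv_mul_cancel₀ h1μ, one_smul]
    abel
  · rintro ⟨lam, rfl⟩
    have hlam : lam ≠ 0 := by
      intro h
      apply hx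
      simp [h]
    have hxc' : c + lam • (p - c) - c = lam • (p - c) := by abel
    have hxp' : c + lam • (p - c) - p = ((lam - 1) / lam) • (lam • (p - c)) := by
      rw [smul_smul, div_mul_cancel₀ _ hlam, sub_smul, one_smul]
      abel
    rw [hxp', ← hxc', mulVec_smul, ← hzdef, mulVec_smul, projPerp_mulVec,
      inv_mul_cancel₀ hzz]
    simp
end

section
/- Let v₁, v₂ be unit vectors in R^n with v₁^T v₂ = cos θ for some θ ∈ (0, π], and let ψ₁, ψ₂ ∈ [0, π/2] with ψ₁ + ψ₂ < θ. Then for any c ∈ R^n and any positive definite E ∈ R^{n×n}, the closed interiors of the cones C(c, E⁻¹v₁, ψ₁, E) and C(c, E⁻¹v₂, ψ₂, E) intersect exactly in the vertex {c}. -/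
/-! The affine map `x ↦ E (x - c)` carries `C_≤(c, E⁻¹ v, ψ, E)` onto the round cone of vectors
making an angle at most `ψ` with `v`. A nonzero vector `y` in both round cones would give, by the
triangle inequality for angles, `θ = ∠(v₁, v₂) ≤ ∠(v₁, y) + ∠(y, v₂) ≤ ψ₁ + ψ₂ < θ`. -/

open Matrix

/-- Euclidean norm of a vector, `‖v‖ = √(v ⬝ᵥ v)`. -/
noncomputable def enorm {n : ℕ} (v : Fin n → ℝ) : ℝ := Real.sqrt (v ⬝ᵥ v)

/-- Closed interior of the cone with vertex `c`, axis `v`, half-aperture `θ`: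
`C_≤(c,v,θ,E) = {x : cos θ ‖Ev‖ ‖E(x-c)‖ ≤ vᵀE²(x-c)}`. -/
noncomputable def coneLe {n : ℕ} (c v : Fin n → ℝ) (θ : ℝ) (E : Matrix (Fin n) (Fin n) ℝ) :
    Set (Fin n → ℝ) :=
  {x | Real.cos θ * _root_.enorm (E *ᵥ v) * _root_.enorm (E *ᵥ (x - c)) ≤ v ⬝ᵥ ((E * E) *ᵥ (x - c))}

open InnerProductGeometry Real
open scoped RealInnerProductSpace

section RoundCone

variable {V : Type*} [NormedAddCommGroup V] [InnerProductSpace ℝ V]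

def roundCone (u : V) (ψ : ℝ) : Set V := {y | cos ψ * ‖u‖ * ‖y‖ ≤ ⟪u, y⟫}

theorem zero_mem_roundCone (u : V) (ψ : ℝ) : (0 : V) ∈ roundCone u ψ := by
  simp [roundCone]

theorem angle_le_of_mem_roundCone {u y : V} {ψ : ℝ} (hu : u ≠ 0) (hy : y ≠ 0) (hψ : 0 ≤ ψ)
    (h : y ∈ roundCone u ψ) : angle u y ≤ ψ := by
  rcases le_or_gt ψ π with hψπ | hπψ
  · by_contra! hlt
    have hcos := cos_lt_cos_of_nonneg_of_le_pi hψ (angle_le_pi u y) hlt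
    rw [cos_angle, div_lt_iff₀ (by positivity), ← mul_assoc] at hcos
    exact hcos.not_ge h
  · exact (angle_le_pi u y).trans hπψ.le

theorem roundCone_inter_roundCone_eq_zero {u₁ u₂ : V} {ψ₁ ψ₂ : ℝ} (hu₁ : u₁ ≠ 0) (hu₂ : u₂ ≠ 0)
    (hψ₁ : 0 ≤ ψ₁) (hψ₂ : 0 ≤ ψ₂) (hsum : ψ₁ + ψ₂ < angle u₁ u₂) :
    roundCone u₁ ψ₁ ∩ roundCone u₂ ψ₂ = {0} := by
  refine Set.eq_singleton_iff_unique_mem.mpr ⟨⟨zero_mem_roundCone _ _, zero_mem_roundCone _ _⟩, ?_⟩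
  rintro y ⟨h₁, h₂⟩
  by_contra hy
  have htri := angle_le_angle_add_angle u₁ y u₂
  rw [angle_comm y u₂] at htri
  linarith [angle_le_of_mem_roundCone hu₁ hy hψ₁ h₁, angle_le_of_mem_roundCone hu₂ hy hψ₂ h₂]

end RoundCone

theorem enorm_eq_norm_toLp {n : ℕ} (v : Fin n → ℝ) : _root_.enorm v = ‖WithLp.toLp 2 v‖ := by
  rw [_root_.enorm, norm_eq_sqrt_real_inner, EuclideanSpace.inner_toLp_toLp, star_trivial,
    dotProduct_comm]

theorem coneLe_inv_mulVec_eq_preimage {n : ℕ} {E : Matrix (Fin n) (Fin n) ℝ} (hE : E.IsSymm)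
    (hEu : IsUnit E) (c v : Fin n → ℝ) (ψ : ℝ) :
    coneLe c (E⁻¹ *ᵥ v) ψ E =
      (fun x => WithLp.toLp 2 (E *ᵥ (x - c))) ⁻¹' roundCone (WithLp.toLp 2 v) ψ := by
  ext x
  have hcancel : E *ᵥ (E⁻¹ *ᵥ v) = v := by
    rw [mulVec_mulVec, mul_nonsing_inv E ((isUnit_iff_isUnit_det E).mp hEu), one_mulVec]
  have hdot : (E⁻¹ *ᵥ v) ⬝ᵥ ((E * E) *ᵥ (x - c)) = (E *ᵥ (x - c)) ⬝ᵥ v := by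
    rw [← mulVec_mulVec, dotProduct_mulVec, ← mulVec_transpose, hE.eq, hcancel, dotProduct_comm]
  simp only [coneLe, roundCone, Set.mem_preimage, Set.mem_ofPred_eq, enorm_eq_norm_toLp, hcancel,
    hdot, EuclideanSpace.inner_toLp_toLp, star_trivial]

theorem cones_intersect_in_vertex_general {n : ℕ} (v₁ v₂ : Fin n → ℝ)
    (hv₁ : v₁ ⬝ᵥ v₁ = 1) (hv₂ : v₂ ⬝ᵥ v₂ = 1) (θ : ℝ) (hθπ : θ ≤ Real.pi)
    (hangle : v₁ ⬝ᵥ v₂ = Real.cos θ) (ψ₁ ψ₂ : ℝ) (hψ₁₀ : 0 ≤ ψ₁)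
    (hψ₂₀ : 0 ≤ ψ₂) (hsum : ψ₁ + ψ₂ < θ)
    (c : Fin n → ℝ) (E : Matrix (Fin n) (Fin n) ℝ) (hE : E.PosDef) :
    coneLe c (E⁻¹ *ᵥ v₁) ψ₁ E ∩ coneLe c (E⁻¹ *ᵥ v₂) ψ₂ E = {c} := by
  have hnorm : ∀ v : Fin n → ℝ, v ⬝ᵥ v = 1 → ‖WithLp.toLp 2 v‖ = 1 := fun v hv => by
    rw [← enorm_eq_norm_toLp, _root_.enorm, hv, sqrt_one]
  have hne : ∀ v : Fin n → ℝ, v ⬝ᵥ v = 1 → WithLp.toLp 2 v ≠ 0 := fun v hv =>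
    norm_ne_zero_iff.mp (by rw [hnorm v hv]; exact one_ne_zero)
  have hθ : angle (WithLp.toLp 2 v₁) (WithLp.toLp 2 v₂) = θ := by
    rw [angle, hnorm v₁ hv₁, hnorm v₂ hv₂, EuclideanSpace.inner_toLp_toLp, star_trivial,
      dotProduct_comm, hangle, mul_one, div_one, arccos_cos (by linarith) hθπ]
  have hE' : E.IsSymm := isHermitian_iff_isSymm.mp hE.isHermitian
  rw [coneLe_inv_mulVec_eq_preimage hE' hE.isUnit, coneLe_inv_mulVec_eq_preimage hE' hE.isUnit,
    ← Set.preimage_inter,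
    roundCone_inter_roundCone_eq_zero (hne v₁ hv₁) (hne v₂ hv₂) hψ₁₀ hψ₂₀ (hθ ▸ hsum)]
  ext x
  rw [Set.mem_preimage, Set.mem_singleton_iff, Set.mem_singleton_iff, WithLp.toLp_eq_zero,
    (mulVec_injective_of_isUnit hE.isUnit).eq_iff' (mulVec_zero E), sub_eq_zero]

/-- Lemma 1: two cones with axes `E⁻¹v₁`, `E⁻¹v₂` separated by angle `θ` and
half-apertures `ψ₁ + ψ₂ < θ` intersect only at the common vertex. -/
theorem cones_intersect_in_vertex {n : ℕ} (v₁ v₂ : Fin n → ℝ)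
    (hv₁ : v₁ ⬝ᵥ v₁ = 1) (hv₂ : v₂ ⬝ᵥ v₂ = 1) (θ : ℝ) (hθ₀ : 0 < θ) (hθπ : θ ≤ Real.pi)
    (hangle : v₁ ⬝ᵥ v₂ = Real.cos θ) (ψ₁ ψ₂ : ℝ) (hψ₁₀ : 0 ≤ ψ₁) (hψ₁ : ψ₁ ≤ Real.pi / 2)
    (hψ₂₀ : 0 ≤ ψ₂) (hψ₂ : ψ₂ ≤ Real.pi / 2) (hsum : ψ₁ + ψ₂ < θ)
    (c : Fin n → ℝ) (E : Matrix (Fin n) (Fin n) ℝ) (hE : E.PosDef) :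
    coneLe c (E⁻¹ *ᵥ v₁) ψ₁ E ∩ coneLe c (E⁻¹ *ᵥ v₂) ψ₂ E = {c} :=
  cones_intersect_in_vertex_general v₁ v₂ hv₁ hv₂ θ hθπ hangle ψ₁ ψ₂ hψ₁₀ hψ₂₀ hsum c E hE
end

section
/- Let E be positive definite, c ∈ R^n nonzero, θ ∈ R, and suppose p₁ lies on the cone C(c,−c,θ,E) with p₁ ≠ c. Define p₋₁ := −E⁻¹ρ(Ec)E p₁, where ρ(z) := I − 2zz^T/‖z‖². Then p₋₁ also lies on C(c,−c,θ,E) and p₋₁ ≠ c. -/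
/-!
Write `z = E c` and `u = E (p₁ - c)`. Since the Householder reflector `ρ(z)` sends `z` to
`-z`, `E (p₋₁ - c) = -ρ(z) (u + z) - z = -ρ(z) u`. As `ρ(z)` is orthogonal, `-ρ(z) u` has the
norm of `u` and the same inner product with `z` (because `z ⬝ ρ(z) u = ρ(z) z ⬝ u = -z ⬝ u`).
Since `E` is symmetric, the cone condition only involves `‖E (x - c)‖` and `E c ⬝ E (x - c)`,
so it carries over from `p₁` to `p₋₁`; and `p₋₁ ≠ c` because `ρ(z)` and `E` are injective.
-/

open Matrix

noncomputable def euclidNorm {n : ℕ} (v : Fin n → ℝ) : ℝ := Real.sqrt (v ⬝ᵥ v)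

/-- Householder reflector `ρ(z) = I - 2zzᵀ/‖z‖²`. -/
noncomputable def reflector {n : ℕ} (z : Fin n → ℝ) : Matrix (Fin n) (Fin n) ℝ :=
  1 - (2 * (z ⬝ᵥ z)⁻¹) • vecMulVec z z

section Reflector

variable {n : ℕ} (z : Fin n → ℝ)

lemma reflector_mulVec (w : Fin n → ℝ) :
    reflector z *ᵥ w = w - (2 * (z ⬝ᵥ w) / (z ⬝ᵥ z)) • z := by
  rw [reflector, sub_mulVec, one_mulVec, smul_mulVec, vecMulVec_mulVec, op_smul_eq_smul,
    smul_smul]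
  congr 2
  field_simp

lemma reflector_mulVec_self : reflector z *ᵥ z = -z := by
  rcases eq_or_ne (z ⬝ᵥ z) 0 with hz | hz
  · simp [dotProduct_self_eq_zero.mp hz]
  · rw [reflector_mulVec, mul_div_assoc, div_self hz, mul_one, two_smul]
    abel

lemma reflector_mulVec_dotProduct_reflector_mulVec (v w : Fin n → ℝ) :
    reflector z *ᵥ v ⬝ᵥ reflector z *ᵥ w = v ⬝ᵥ w := by
  rcases eq_or_ne (z ⬝ᵥ z) 0 with hz | hz
  · simp [dotProduct_self_eq_zero.mp hz, reflector]
  · simp only [reflector_mulVec, sub_dotProduct, dotProduct_sub, smul_dotProduct,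
      dotProduct_smul, smul_eq_mul, dotProduct_comm v z]
    field_simp
    ring

lemma dotProduct_reflector_mulVec (w : Fin n → ℝ) :
    z ⬝ᵥ reflector z *ᵥ w = -(z ⬝ᵥ w) := by
  rw [← reflector_mulVec_dotProduct_reflector_mulVec z z w, reflector_mulVec_self, neg_dotProduct,
    neg_neg]

lemma euclidNorm_reflector_mulVec (w : Fin n → ℝ) :
    euclidNorm (reflector z *ᵥ w) = euclidNorm w := by
  rw [euclidNorm, reflector_mulVec_dotProduct_reflector_mulVec, euclidNorm]

end Reflector

lemma euclidNorm_neg {n : ℕ} (v : Fin n → ℝ) : euclidNorm (-v) = euclidNorm v := by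
  simp [euclidNorm]

lemma dotProduct_mul_self_mulVec_of_isSymm {m R : Type*} [Fintype m] [CommSemiring R]
    {E : Matrix m m R} (hE : E.IsSymm) (v w : m → R) : v ⬝ᵥ (E * E) *ᵥ w = E *ᵥ v ⬝ᵥ E *ᵥ w := by
  rw [← mulVec_mulVec, dotProduct_mulVec, ← mulVec_transpose, hE.eq]

theorem reflected_point_on_cone_general {n : ℕ} (E : Matrix (Fin n) (Fin n) ℝ) (hE : E.PosDef)
    (c : Fin n → ℝ) (θ : ℝ) (p₁ : Fin n → ℝ) (hp₁c : p₁ ≠ c)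
    (hcone : Real.cos θ * euclidNorm (E *ᵥ c) * euclidNorm (E *ᵥ (p₁ - c))
      = -(c ⬝ᵥ ((E * E) *ᵥ (p₁ - c))))
    (pm : Fin n → ℝ) (hpm : pm = -(E⁻¹ *ᵥ (reflector (E *ᵥ c) *ᵥ (E *ᵥ p₁)))) :
    Real.cos θ * euclidNorm (E *ᵥ c) * euclidNorm (E *ᵥ (pm - c)) = -(c ⬝ᵥ ((E * E) *ᵥ (pm - c)))
      ∧ pm ≠ c := by
  have hsymm : E.IsSymm := isHermitian_iff_isSymm.mp hE.isHermitian
  have hunit : IsUnit E := hE.isUnit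
  set z := E *ᵥ c
  set u := E *ᵥ (p₁ - c)
  have hEpm : E *ᵥ (pm - c) = -(reflector z *ᵥ u) := by
    have hEp₁ : E *ᵥ p₁ = u + z := by simp [u, z, mulVec_sub]
    rw [mulVec_sub, hpm, mulVec_neg, mulVec_mulVec,
      mul_nonsing_inv E ((isUnit_iff_isUnit_det E).mp hunit), one_mulVec, hEp₁, mulVec_add,
      reflector_mulVec_self]
    abel
  refine ⟨?_, fun hpmc => hp₁c ?_⟩
  · rw [dotProduct_mul_self_mulVec_of_isSymm hsymm, hEpm, euclidNorm_neg,
      euclidNorm_reflector_mulVec, dotProduct_neg, dotProduct_reflector_mulVec, neg_neg, hcone,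
      dotProduct_mul_self_mulVec_of_isSymm hsymm]
  · have hρu : reflector z *ᵥ u = 0 := by
      rw [← neg_eq_zero, ← hEpm, hpmc, sub_self, mulVec_zero]
    have hu0 : u = 0 := by
      rw [← dotProduct_self_eq_zero, ← reflector_mulVec_dotProduct_reflector_mulVec z, hρu,
        zero_dotProduct]
    exact sub_eq_zero.mp (mulVec_injective_of_isUnit hunit (by rw [mulVec_zero]; exact hu0))

/-- If `p₁` lies on the cone `C(c,-c,θ,E)` and `p₁ ≠ c`, so does
`p₋₁ := -E⁻¹ ρ(Ec) E p₁`. -/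
theorem reflected_point_on_cone {n : ℕ} (E : Matrix (Fin n) (Fin n) ℝ) (hE : E.PosDef)
    (c : Fin n → ℝ) (hc : c ≠ 0) (θ : ℝ) (p₁ : Fin n → ℝ) (hp₁c : p₁ ≠ c)
    (hnorm : euclidNorm (E *ᵥ (p₁ - c)) ≠ 0)
    (hcone : Real.cos θ * euclidNorm (E *ᵥ c) * euclidNorm (E *ᵥ (p₁ - c))
      = -(c ⬝ᵥ ((E * E) *ᵥ (p₁ - c))))
    (pm : Fin n → ℝ) (hpm : pm = -(E⁻¹ *ᵥ (reflector (E *ᵥ c) *ᵥ (E *ᵥ p₁)))) :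
    Real.cos θ * euclidNorm (E *ᵥ c) * euclidNorm (E *ᵥ (pm - c)) = -(c ⬝ᵥ ((E * E) *ᵥ (pm - c)))
      ∧ pm ≠ c :=
  reflected_point_on_cone_general E hE c θ p₁ hp₁c hcone pm hpm
end

section
/- If two unit vectors v₁, v₂ in R^n satisfy v₁^T v₂ = cos(2θ) with 0 < 2ψ̄ < 2θ ≤ π, then, for any c ∈ R^n and positive definite E, the union of the closed exteriors of the two cones C(c, E⁻¹v₁, ψ̄, E) and C(c, E⁻¹v₂, ψ̄, E) covers all of R^n; equivalently, the intersection of the two closed cone interiors is {c}, whose complement is covered by the union of the strict exteriors. -/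
open Matrix

/-- Euclidean norm of a vector, `‖v‖ = √(v ⬝ᵥ v)`. -/
noncomputable def vecEnorm {n : ℕ} (v : Fin n → ℝ) : ℝ := Real.sqrt (v ⬝ᵥ v)

/-- Closed exterior of the cone:
`C_≥(c,v,ψ,E) = {x : cos ψ ‖Ev‖ ‖E(x-c)‖ ≥ vᵀE²(x-c)}`. -/
noncomputable def coneGe {n : ℕ} (c v : Fin n → ℝ) (ψ : ℝ) (E : Matrix (Fin n) (Fin n) ℝ) :
    Set (Fin n → ℝ) :=
  {x | v ⬝ᵥ ((E * E) *ᵥ (x - c)) ≤ Real.cos ψ * vecEnorm (E *ᵥ v) * vecEnorm (E *ᵥ (x - c))}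

/-!
Substituting `y = E (x - c)` turns each cone into the round cone about `vᵢ`, because `E` is
symmetric and `E E⁻¹ vᵢ = vᵢ`. A vector `y` strictly inside both round cones would make angles
less than `ψ̄` with `v₁` and with `v₂`, so the triangle inequality for angles would give
`∠(v₁, v₂) < 2ψ̄ < 2θ`; but `2θ ∈ [0, π]` and `cos ∠(v₁, v₂) = cos 2θ` force `∠(v₁, v₂) = 2θ`.
-/

open scoped InnerProductSpace

namespace InnerProductGeometry

variable {V : Type*} [NormedAddCommGroup V] [InnerProductSpace ℝ V]

open Real in
lemma angle_lt_of_cos_mul_lt_inner {ψ : ℝ} (hψ₀ : 0 ≤ ψ) {u y : V}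
    (h : cos ψ * ‖u‖ * ‖y‖ < ⟪u, y⟫_ℝ) : angle u y < ψ := by
  rw [mul_assoc] at h
  have hpos : 0 < ‖u‖ * ‖y‖ := by
    refine (mul_nonneg (norm_nonneg u) (norm_nonneg y)).lt_of_ne fun h0 => ?_
    have hinner := abs_real_inner_le_norm u y
    rw [← h0] at h hinner
    rw [mul_zero] at h
    linarith [le_abs_self ⟪u, y⟫_ℝ]
  have hcos : cos ψ < cos (angle u y) := by
    rwa [cos_angle, lt_div_iff₀ hpos]
  by_contra! hle
  exact hcos.not_ge (cos_le_cos_of_nonneg_of_le_pi hψ₀ (angle_le_pi u y) hle)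

lemma inner_le_or_inner_le_of_two_mul_le_angle {ψ : ℝ} (hψ₀ : 0 ≤ ψ) {u₁ u₂ : V}
    (hangle : 2 * ψ ≤ angle u₁ u₂) (y : V) :
    ⟪u₁, y⟫_ℝ ≤ Real.cos ψ * ‖u₁‖ * ‖y‖ ∨ ⟪u₂, y⟫_ℝ ≤ Real.cos ψ * ‖u₂‖ * ‖y‖ := by
  by_contra! h
  obtain ⟨h₁, h₂⟩ := h
  have hy₁ := angle_lt_of_cos_mul_lt_inner hψ₀ h₁
  have hy₂ := angle_lt_of_cos_mul_lt_inner hψ₀ h₂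
  linarith [angle_le_angle_add_angle u₁ y u₂, angle_comm u₂ y]

lemma angle_eq_of_inner_eq_cos {u v : V} (hu : ‖u‖ = 1) (hv : ‖v‖ = 1) {α : ℝ} (hα₀ : 0 ≤ α)
    (hαπ : α ≤ Real.pi) (h : ⟪u, v⟫_ℝ = Real.cos α) : angle u v = α := by
  rw [angle, hu, hv, h, mul_one, div_one, Real.arccos_cos hα₀ hαπ]

end InnerProductGeometry

lemma vecEnorm_eq_norm {n : ℕ} (v : Fin n → ℝ) :
    vecEnorm v = ‖(WithLp.toLp 2 v : EuclideanSpace ℝ (Fin n))‖ := by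
  rw [vecEnorm, norm_eq_sqrt_real_inner, EuclideanSpace.inner_toLp_toLp, star_trivial]

lemma dotProduct_eq_inner {n : ℕ} (v w : Fin n → ℝ) :
    v ⬝ᵥ w = ⟪(WithLp.toLp 2 v : EuclideanSpace ℝ (Fin n)), WithLp.toLp 2 w⟫_ℝ := by
  rw [EuclideanSpace.inner_toLp_toLp, star_trivial, dotProduct_comm]

lemma mem_coneGe_inv_mulVec_iff {n : ℕ} {E : Matrix (Fin n) (Fin n) ℝ} (hE : E.IsSymm)
    (hdet : IsUnit E.det) (c v x : Fin n → ℝ) (ψ : ℝ) :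
    x ∈ coneGe c (E⁻¹ *ᵥ v) ψ E ↔
      v ⬝ᵥ (E *ᵥ (x - c)) ≤ Real.cos ψ * vecEnorm v * vecEnorm (E *ᵥ (x - c)) := by
  have hcancel : E *ᵥ (E⁻¹ *ᵥ v) = v := by
    rw [mulVec_mulVec, mul_nonsing_inv E hdet, one_mulVec]
  have hinner : (E⁻¹ *ᵥ v) ⬝ᵥ ((E * E) *ᵥ (x - c)) = v ⬝ᵥ (E *ᵥ (x - c)) := by
    rw [← mulVec_mulVec, dotProduct_mulVec, ← mulVec_transpose, hE.eq, hcancel]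
  rw [coneGe, Set.mem_ofPred_eq, hinner, hcancel]

open InnerProductGeometry in
/-- The closed exteriors of two cones with axes `E⁻¹v₁`, `E⁻¹v₂` separated by angle `2θ`
and half-apertures `ψ̄ < θ` cover all of `ℝⁿ`. -/
theorem cone_exteriors_cover {n : ℕ} (v₁ v₂ : Fin n → ℝ)
    (hv₁ : v₁ ⬝ᵥ v₁ = 1) (hv₂ : v₂ ⬝ᵥ v₂ = 1) (θ : ℝ)
    (hangle : v₁ ⬝ᵥ v₂ = Real.cos (2 * θ)) (hθπ : 2 * θ ≤ Real.pi)
    (ψb : ℝ) (hψb₀ : 0 < ψb) (hψb : ψb < θ)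
    (c : Fin n → ℝ) (E : Matrix (Fin n) (Fin n) ℝ) (hE : E.PosDef) :
    coneGe c (E⁻¹ *ᵥ v₁) ψb E ∪ coneGe c (E⁻¹ *ᵥ v₂) ψb E = Set.univ := by
  have hsymm : E.IsSymm := isHermitian_iff_isSymm.mp hE.isHermitian
  have hdet : IsUnit E.det := (isUnit_iff_isUnit_det E).mp hE.isUnit
  have hunit : ∀ v : Fin n → ℝ, v ⬝ᵥ v = 1 → ‖(WithLp.toLp 2 v : EuclideanSpace ℝ (Fin n))‖ = 1 :=
    fun v hv => by rw [← vecEnorm_eq_norm, vecEnorm, hv, Real.sqrt_one]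
  have haxes : angle (WithLp.toLp 2 v₁ : EuclideanSpace ℝ (Fin n)) (WithLp.toLp 2 v₂) = 2 * θ :=
    angle_eq_of_inner_eq_cos (hunit v₁ hv₁) (hunit v₂ hv₂) (by linarith) hθπ
      (by rwa [← dotProduct_eq_inner])
  ext x
  simp only [Set.mem_union, Set.mem_univ, iff_true, mem_coneGe_inv_mulVec_iff hsymm hdet,
    dotProduct_eq_inner, vecEnorm_eq_norm]
  exact inner_le_or_inner_le_of_two_mul_le_angle hψb₀.le (by linarith) _
end
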